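/- arXiv:1703.07736 — 4 statements merged into one kernel-verified Lean document; each statement's English description precedes it below -/
import Mathlib

section
/- (Theorem 2) Let G = (V, E) be a finite undirected graph with no cycles, with at least one edge, incidence matrix B, and let r > 0 and k_r > 0 satisfy r - π k_r max_{i∈V} |N_i| > 0, where |N_i| is the degree of vertex i. Define f : ℝ^{|E|} → ℝ^{|E|} componentwise by f_k(e) = 1/(r + k_r B_i e) - 1/(r + k_r B_j e), where i, j are the tail and head of edge k and B_i is the i-th row of B. Then the equilibrium e = 0 of the system e'(t) = f(e(t)) is locally exponentially stable: there exist δ > 0, a > 0 and b > 0 such that every differentiable solution e : [0, ∞) → ℝ^{|E|} of e'(t) = f(e(t)) with ‖e(0)‖ < δ satisfies ‖e(t)‖ ≤ a e^{-b t} ‖e(0)‖ for all t ≥ 0. -/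
open Matrix

open SimpleGraph

lemma exists_leaf {V E : Type*} [Fintype V] [DecidableEq V]
    (tail head : E → V)
    (h_loop : ∀ k, tail k ≠ head k)
    (h_simple : Function.Injective fun k : E => s(tail k, head k))
    (h_acyclic : (SimpleGraph.fromEdgeSet
        (Set.range fun k : E => s(tail k, head k))).IsAcyclic)
    (S : Finset E) (hS : S.Nonempty) :
    ∃ u : V, ∃ k₀ ∈ S, (tail k₀ = u ∨ head k₀ = u) ∧
      ∀ k ∈ S, (tail k = u ∨ head k = u) → k = k₀ := by
  classical
  set G' : SimpleGraph V := SimpleGraph.fromEdgeSet ((fun k => s(tail k, head k)) '' S) with hG'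
  have hle : G' ≤ SimpleGraph.fromEdgeSet (Set.range fun k : E => s(tail k, head k)) := by
    apply SimpleGraph.fromEdgeSet_mono
    rintro x ⟨k, _, rfl⟩; exact ⟨k, rfl⟩
  have hG'ac : G'.IsAcyclic := fun v c hc => h_acyclic (c.mapLe hle) (hc.mapLe hle)
  have hadjiff : ∀ u w : V, G'.Adj u w ↔ (∃ k ∈ S, s(tail k, head k) = s(u, w)) ∧ u ≠ w := by
    intro u w
    rw [hG', SimpleGraph.fromEdgeSet_adj]
    simp [Set.mem_image]
  obtain ⟨k₁, hk₁⟩ := hS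
  set L : Set ℕ := {n | ∃ (u v : V) (p : G'.Walk u v), p.IsPath ∧ p.length = n} with hLdef
  have hL1 : 1 ∈ L := by
    have hadj : G'.Adj (tail k₁) (head k₁) := by
      rw [hadjiff]; exact ⟨⟨k₁, hk₁, rfl⟩, h_loop k₁⟩
    exact ⟨tail k₁, head k₁, Walk.cons hadj Walk.nil, by simp [Walk.isPath_def, h_loop k₁], rfl⟩
  have hLbdd : BddAbove L := by
    refine ⟨Fintype.card V, ?_⟩
    rintro n ⟨u, v, p, hp, rfl⟩
    exact hp.length_lt.le
  obtain ⟨u, v, p, hp, hlen⟩ := Nat.sSup_mem ⟨1, hL1⟩ hLbdd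
  have hone : 1 ≤ sSup L := le_csSup hLbdd hL1
  cases p with
  | nil => simp at hlen; omega
  | @cons _ w₀ _ hadj0 q =>
    -- claim: every neighbor of u is w₀
    have hclaim : ∀ w, G'.Adj u w → w = w₀ := by
      intro w hw
      by_cases hws : w ∈ (Walk.cons hadj0 q).support
      · have heq : (Walk.cons hadj0 q).takeUntil w hws = Walk.cons hw Walk.nil := by
          have h2 := hG'ac.path_unique
            ⟨(Walk.cons hadj0 q).takeUntil w hws, hp.takeUntil hws⟩ (Path.singleton hw)
          exact congrArg Subtype.val h2
        have hts := Walk.take_spec (Walk.cons hadj0 q) hws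
        rw [heq] at hts
        rw [Walk.cons_append, Walk.nil_append] at hts
        have h1 : (Walk.cons hadj0 q).getVert 1 = w₀ := by
          simp [Walk.getVert_cons_succ, Walk.getVert_zero]
        rw [← hts] at h1
        simpa [Walk.getVert_cons_succ, Walk.getVert_zero] using h1
      · exfalso
        have hp' : (Walk.cons hw.symm (Walk.cons hadj0 q)).IsPath := by
          rw [Walk.cons_isPath_iff]; exact ⟨hp, hws⟩
        have : (Walk.cons hw.symm (Walk.cons hadj0 q)).length ∈ L :=
          ⟨w, v, _, hp', rfl⟩
        have hle' := le_csSup hLbdd this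
        simp [Walk.length_cons] at hle' hlen
        omega
    -- extract the edge
    have hadj0' := hadj0
    rw [hadjiff] at hadj0'
    obtain ⟨⟨k₀, hk₀S, hk₀eq⟩, hne⟩ := hadj0'
    rw [Sym2.eq_iff] at hk₀eq
    refine ⟨u, k₀, hk₀S, ?_, ?_⟩
    · rcases hk₀eq with ⟨h1, _⟩ | ⟨_, h2⟩
      · exact Or.inl h1
      · exact Or.inr h2
    · intro k hkS hkinc
      have hadjk : ∃ w', G'.Adj u w' ∧ s(tail k, head k) = s(u, w') := by
        rcases hkinc with h | h
        · refine ⟨head k, ?_, by rw [h]⟩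
          rw [hadjiff]
          exact ⟨⟨k, hkS, by rw [h]⟩, by rw [← h]; exact h_loop k⟩
        · refine ⟨tail k, ?_, by rw [h, Sym2.eq_swap]⟩
          rw [hadjiff]
          refine ⟨⟨k, hkS, by rw [h, Sym2.eq_swap]⟩, ?_⟩
          rw [← h]; exact (h_loop k).symm
      obtain ⟨w', hw', heqk⟩ := hadjk
      have hw'w₀ := hclaim w' hw'
      apply h_simple
      simp only []
      rw [heqk, hw'w₀]
      rcases hk₀eq with ⟨h1, h2⟩ | ⟨h1, h2⟩
      · rw [h1, h2]
      · rw [h1, h2, Sym2.eq_swap]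

open SimpleGraph

lemma B_inj {V E : Type*} [Fintype V] [Fintype E] [DecidableEq V]
    (tail head : E → V)
    (h_loop : ∀ k, tail k ≠ head k)
    (h_simple : Function.Injective fun k : E => s(tail k, head k))
    (h_acyclic : (SimpleGraph.fromEdgeSet
        (Set.range fun k : E => s(tail k, head k))).IsAcyclic)
    (B : Matrix V E ℝ)
    (hB : ∀ i k, B i k = if i = tail k then 1 else if i = head k then -1 else 0)
    (x : E → ℝ) (hx : ∀ i, ∑ k, B i k * x k = 0) : x = 0 := by
  classical
  by_contra hx0
  have : ∃ k, x k ≠ 0 := by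
    by_contra h; push_neg at h; exact hx0 (funext fun k => h k)
  obtain ⟨km, hkm⟩ := this
  set S : Finset E := Finset.univ.filter (fun k => x k ≠ 0) with hSdef
  have hS : S.Nonempty := ⟨km, by simp [hSdef, hkm]⟩
  obtain ⟨u, k₀, hk₀S, hk₀inc, huniq⟩ :=
    exists_leaf tail head h_loop h_simple h_acyclic S hS
  have hsum : ∑ k, B u k * x k = B u k₀ * x k₀ := by
    apply Finset.sum_eq_single_of_mem k₀ (Finset.mem_univ _)
    intro k _ hkne
    by_cases hxk : x k = 0
    · rw [hxk, mul_zero]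
    · have hkS : k ∈ S := by simp [hSdef, hxk]
      have : ¬(tail k = u ∨ head k = u) := fun h => hkne (huniq k hkS h)
      push_neg at this
      rw [hB]
      simp [Ne.symm this.1, Ne.symm this.2]
  have hBuk : B u k₀ = 1 ∨ B u k₀ = -1 := by
    rw [hB]
    rcases hk₀inc with h | h
    · left; simp [h.symm]
    · have hne : u ≠ tail k₀ := by
        intro hc
        exact h_loop k₀ (by rw [← hc, h])
      right; rw [if_neg hne, if_pos h.symm]
  have hxk₀ : x k₀ ≠ 0 := by
    have := hk₀S
    simp only [hSdef, Finset.mem_filter] at this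
    exact this.2
  have h0 : (0 : ℝ) = B u k₀ * x k₀ := by rw [← hx u, hsum]
  rcases hBuk with h | h <;> rw [h] at h0 <;> exact hxk₀ (by linarith)

lemma pi_norm_sq_le_sum {ι : Type*} [Fintype ι] (y : ι → ℝ) : ‖y‖^2 ≤ ∑ i, (y i)^2 := by
  rcases isEmpty_or_nonempty ι with h | h
  · have : y = 0 := Subsingleton.elim _ _
    simp [this]
  · have hnn : (0:ℝ) ≤ ∑ i, (y i)^2 := Finset.sum_nonneg fun i _ => sq_nonneg _
    have h1 : ‖y‖ ≤ Real.sqrt (∑ i, (y i)^2) := by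
      rw [pi_norm_le_iff_of_nonneg (Real.sqrt_nonneg _)]
      intro i
      rw [Real.norm_eq_abs, ← Real.sqrt_sq_eq_abs]
      exact Real.sqrt_le_sqrt
        (Finset.single_le_sum (f := fun i => (y i)^2) (fun i _ => sq_nonneg _) (Finset.mem_univ i))
    calc ‖y‖^2 ≤ Real.sqrt (∑ i, (y i)^2)^2 := by
          exact pow_le_pow_left₀ (norm_nonneg _) h1 2
      _ = ∑ i, (y i)^2 := Real.sq_sqrt hnn

lemma sum_sq_le_card_norm {ι : Type*} [Fintype ι] (x : ι → ℝ) :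
    ∑ k, (x k)^2 ≤ (Fintype.card ι : ℝ) * ‖x‖^2 := by
  calc ∑ k, (x k)^2 ≤ ∑ _k : ι, ‖x‖^2 := by
        refine Finset.sum_le_sum fun k _ => ?_
        have := norm_le_pi_norm x k
        rw [Real.norm_eq_abs] at this
        calc (x k)^2 = |x k|^2 := (sq_abs _).symm
          _ ≤ ‖x‖^2 := pow_le_pow_left₀ (abs_nonneg _) this 2
    _ = (Fintype.card ι : ℝ) * ‖x‖^2 := by rw [Finset.sum_const, Finset.card_univ]; ring

open Matrix in
lemma key_ineq {V E : Type*} [Fintype V] [Fintype E] [DecidableEq V] [Nonempty E]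
    (tail head : E → V) (h_loop : ∀ k, tail k ≠ head k)
    (B : Matrix V E ℝ)
    (hB : ∀ i k, B i k = if i = tail k then 1 else if i = head k then -1 else 0)
    (r kr : ℝ) (hr : 0 < r) (hkr : 0 < kr)
    (f : (E → ℝ) → (E → ℝ))
    (hf : ∀ (e : E → ℝ) (k : E),
      f e k = 1 / (r + kr * (B (tail k) ⬝ᵥ e)) - 1 / (r + kr * (B (head k) ⬝ᵥ e)))
    (lam : ℝ) (hlam : 0 < lam)
    (hcoer : ∀ x : E → ℝ, lam * ∑ k, (x k)^2 ≤ ∑ i, (B i ⬝ᵥ x)^2)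
    (x : E → ℝ) (hx : ‖x‖ ≤ r / (2 * kr * (Fintype.card E))) :
    ∑ k, x k * f x k ≤ -(kr / (2*r^2) * lam) * ∑ k, (x k)^2 := by
  classical
  set y : V → ℝ := fun i => B i ⬝ᵥ x with hy
  set ψ : V → ℝ := fun i => 1/(r + kr * y i) - 1/r with hψ
  have hcard : (0:ℝ) < Fintype.card E := by
    exact_mod_cast Fintype.card_pos
  have hyb : ∀ i, kr * |y i| ≤ r/2 := by
    intro i
    have h1 : |y i| ≤ (Fintype.card E : ℝ) * ‖x‖ := by
      calc |y i| = |∑ k, B i k * x k| := by simp [hy, dotProduct]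
        _ ≤ ∑ k, |B i k * x k| := Finset.abs_sum_le_sum_abs _ _
        _ ≤ ∑ _k : E, ‖x‖ := by
            refine Finset.sum_le_sum fun k _ => ?_
            rw [abs_mul]
            have hb1 : |B i k| ≤ 1 := by rw [hB]; split_ifs <;> simp
            have hx1 : |x k| ≤ ‖x‖ := by
              have := norm_le_pi_norm x k; rwa [Real.norm_eq_abs] at this
            calc |B i k| * |x k| ≤ 1 * ‖x‖ :=
                  mul_le_mul hb1 hx1 (abs_nonneg _) zero_le_one
              _ = ‖x‖ := one_mul _
        _ = (Fintype.card E : ℝ) * ‖x‖ := by rw [Finset.sum_const, Finset.card_univ]; ring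
    have h2 : (Fintype.card E : ℝ) * ‖x‖ ≤ r / (2 * kr) := by
      calc (Fintype.card E : ℝ) * ‖x‖ ≤ (Fintype.card E : ℝ) * (r / (2 * kr * (Fintype.card E))) :=
            mul_le_mul_of_nonneg_left hx (le_of_lt hcard)
        _ = r / (2 * kr) := by
            have hcne : (Fintype.card E : ℝ) ≠ 0 := ne_of_gt hcard
            field_simp
    calc kr * |y i| ≤ kr * (r / (2*kr)) := mul_le_mul_of_nonneg_left (h1.trans h2) hkr.le
      _ = r / 2 := by field_simp
  have hD : ∀ i, r/2 ≤ r + kr * y i ∧ r + kr * y i ≤ 2*r := by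
    intro i
    have h := hyb i
    have h1 : -(r/2) ≤ kr * y i := by
      have : -(kr * |y i|) ≤ kr * y i := by
        rw [← mul_neg]
        exact mul_le_mul_of_nonneg_left (neg_abs_le _) hkr.le
      linarith
    have h2 : kr * y i ≤ r/2 := by
      have : kr * y i ≤ kr * |y i| := mul_le_mul_of_nonneg_left (le_abs_self _) hkr.le
      linarith
    constructor <;> linarith
  have hDpos : ∀ i, 0 < r + kr * y i := fun i => lt_of_lt_of_le (by linarith) (hD i).1
  -- identity
  have hfk : ∀ k, f x k = ∑ i, ((if i = tail k then ψ i else 0) - (if i = head k then ψ i else 0)) := by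
    intro k
    rw [hf]
    rw [Finset.sum_sub_distrib]
    simp only [Finset.sum_ite_eq', Finset.mem_univ, if_true]
    simp only [hψ]
    ring
  have hident : ∑ k, x k * f x k = ∑ i, ψ i * y i := by
    have h1 : ∀ k, x k * f x k = ∑ i, ψ i * (B i k * x k) := by
      intro k
      rw [hfk k, Finset.mul_sum]
      refine Finset.sum_congr rfl fun i _ => ?_
      rw [hB]
      by_cases h1 : i = tail k
      · have h2 : ¬ i = head k := fun hc => h_loop k (h1 ▸ hc ▸ rfl)
        simp [h1, h2, h_loop k, (h_loop k).symm]; ring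
      · by_cases h2 : i = head k
        · simp [h1, h2, h_loop k, (h_loop k).symm]; ring
        · simp [h1, h2]
    rw [Finset.sum_congr rfl fun k _ => h1 k, Finset.sum_comm]
    refine Finset.sum_congr rfl fun i _ => ?_
    rw [← Finset.mul_sum]
    congr 1
  rw [hident]
  -- pointwise bound
  have hpt : ∀ i, ψ i * y i ≤ -(kr / (2*r^2)) * (y i)^2 := by
    intro i
    have hD1 := (hD i).1
    have hD2 := (hD i).2
    have hne0 : r + kr * y i ≠ 0 := (hDpos i).ne'
    have heq : ψ i * y i = -((kr * (y i)^2) / (r * (r + kr * y i))) := by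
      simp only [hψ]
      field_simp
      ring
    rw [heq]
    have hfrac : (kr * (y i)^2) / (2*r^2) ≤ (kr * (y i)^2) / (r * (r + kr * y i)) :=
      div_le_div_of_nonneg_left (by positivity) (by nlinarith) (by nlinarith)
    have : -((kr * (y i)^2) / (r * (r + kr * y i))) ≤ -((kr * (y i)^2) / (2*r^2)) :=
      neg_le_neg hfrac
    calc -((kr * (y i)^2) / (r * (r + kr * y i))) ≤ -((kr * (y i)^2) / (2*r^2)) := this
      _ = -(kr / (2*r^2)) * (y i)^2 := by ring
  calc ∑ i, ψ i * y i ≤ ∑ i, -(kr / (2*r^2)) * (y i)^2 := Finset.sum_le_sum fun i _ => hpt i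
    _ = -(kr / (2*r^2)) * ∑ i, (y i)^2 := by rw [Finset.mul_sum]
    _ ≤ -(kr / (2*r^2)) * (lam * ∑ k, (x k)^2) := by
        have hc : (0:ℝ) ≤ kr / (2*r^2) := by positivity
        have h2 := hcoer x
        nlinarith [h2]
    _ = -(kr / (2*r^2) * lam) * ∑ k, (x k)^2 := by ring

open Matrix in
lemma coercive {V E : Type*} [Fintype V] [Fintype E] [Nonempty E]
    (B : Matrix V E ℝ)
    (hinj : ∀ x : E → ℝ, (∀ i, ∑ k, B i k * x k = 0) → x = 0) :
    ∃ lam : ℝ, 0 < lam ∧ ∀ x : E → ℝ, lam * ∑ k, (x k)^2 ≤ ∑ i, (B i ⬝ᵥ x)^2 := by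
  classical
  have hker : LinearMap.ker (Matrix.mulVecLin B) = ⊥ := by
    rw [LinearMap.ker_eq_bot']
    intro x hx0
    apply hinj
    intro i
    have h := congrFun hx0 i
    simpa [Matrix.mulVecLin_apply, Matrix.mulVec, dotProduct] using h
  obtain ⟨K, hK, hanti⟩ := LinearMap.exists_antilipschitzWith (Matrix.mulVecLin B) hker
  have hKpos : (0:ℝ) < K := hK
  have hcard : (0:ℝ) < Fintype.card E := by exact_mod_cast Fintype.card_pos
  refine ⟨((K:ℝ)^2 * Fintype.card E)⁻¹, by positivity, ?_⟩
  intro x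
  have h1 : ‖x‖ ≤ (K:ℝ) * ‖Matrix.mulVecLin B x‖ := by
    have h := hanti.le_mul_dist x 0
    simpa [dist_eq_norm] using h
  have h2 := sum_sq_le_card_norm x
  have h3 : ‖Matrix.mulVecLin B x‖^2 ≤ ∑ i, (B i ⬝ᵥ x)^2 := by
    have h := pi_norm_sq_le_sum (Matrix.mulVecLin B x)
    simpa [Matrix.mulVecLin_apply, Matrix.mulVec] using h
  have h4 : ‖x‖^2 ≤ (K:ℝ)^2 * ‖Matrix.mulVecLin B x‖^2 := by
    have := pow_le_pow_left₀ (norm_nonneg x) h1 2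
    calc ‖x‖^2 ≤ ((K:ℝ) * ‖Matrix.mulVecLin B x‖)^2 := this
      _ = (K:ℝ)^2 * ‖Matrix.mulVecLin B x‖^2 := by ring
  set lam : ℝ := ((K:ℝ)^2 * Fintype.card E)⁻¹ with hlam
  have hlampos : 0 < lam := by positivity
  calc lam * ∑ k, (x k)^2 ≤ lam * ((Fintype.card E : ℝ) * ‖x‖^2) :=
        mul_le_mul_of_nonneg_left h2 hlampos.le
    _ ≤ lam * ((Fintype.card E : ℝ) * ((K:ℝ)^2 * ‖Matrix.mulVecLin B x‖^2)) :=
        mul_le_mul_of_nonneg_left (mul_le_mul_of_nonneg_left h4 hcard.le) hlampos.le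
    _ = ‖Matrix.mulVecLin B x‖^2 := by
        rw [hlam]
        field_simp
    _ ≤ ∑ i, (B i ⬝ᵥ x)^2 := h3

lemma exp_decay {E : Type*} [Fintype E] [Nonempty E]
    (f : (E → ℝ) → (E → ℝ)) (b δ₀ : ℝ) (hb : 0 < b) (hδ₀ : 0 < δ₀)
    (hdiss : ∀ x : E → ℝ, ‖x‖ ≤ δ₀ → ∑ k, x k * f x k ≤ -b * ∑ k, (x k)^2)
    (e : ℝ → E → ℝ) (he : ∀ t : ℝ, 0 ≤ t → HasDerivAt e (f (e t)) t)
    (hinit : ‖e 0‖ < δ₀ / Real.sqrt (Fintype.card E)) :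
    ∀ t, 0 ≤ t →
      ‖e t‖ ≤ Real.sqrt (Fintype.card E) * Real.exp (-b * t) * ‖e 0‖ := by
  classical
  set n : ℝ := (Fintype.card E : ℝ) with hn
  have hnpos : 0 < n := by rw [hn]; exact_mod_cast Fintype.card_pos
  have hsn : 0 < Real.sqrt n := Real.sqrt_pos.mpr hnpos
  set g : ℝ → ℝ := fun t => ∑ k, (e t k)^2 with hgdef
  set gd : ℝ → ℝ := fun t => ∑ k, 2 * e t k * f (e t) k with hgddef
  set h : ℝ → ℝ := fun t => g t * Real.exp (2*b*t) with hhdef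
  have hgnn : ∀ t, 0 ≤ g t := fun t => Finset.sum_nonneg fun k _ => sq_nonneg _
  have hg' : ∀ t, 0 ≤ t → HasDerivAt g (gd t) t := by
    intro t ht
    have hco : ∀ k : E, HasDerivAt (fun s => e s k) (f (e t) k) t :=
      fun k => hasDerivAt_pi.mp (he t ht) k
    have hsum := HasDerivAt.fun_sum (fun k (_ : k ∈ Finset.univ) => (hco k).fun_pow 2)
    refine hsum.congr_deriv ?_
    rw [hgddef]
    refine Finset.sum_congr rfl fun k _ => ?_
    simp
    try ring
  have hh' : ∀ t, 0 ≤ t →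
      HasDerivAt h (gd t * Real.exp (2*b*t) + g t * (Real.exp (2*b*t) * (2*b))) t := by
    intro t ht
    have hexp : HasDerivAt (fun s : ℝ => Real.exp (2*b*s)) (Real.exp (2*b*t) * (2*b)) t := by
      have h1 : HasDerivAt (fun s : ℝ => 2*b*s) (2*b) t := by
        simpa using (hasDerivAt_id t).const_mul (2*b)
      exact h1.exp
    exact (hg' t ht).mul hexp
  have hgcont : ∀ t, 0 ≤ t → ContinuousAt g t := fun t ht => (hg' t ht).continuousAt
  have hhcont : ∀ t, 0 ≤ t → ContinuousAt h t := fun t ht =>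
    ((hg' t ht).continuousAt.mul (Real.continuous_exp.comp (continuous_const.mul continuous_id)).continuousAt)
  -- norm bound from g
  have hnorm_le : ∀ t, g t ≤ δ₀^2 → ‖e t‖ ≤ δ₀ := by
    intro t hgt
    have h1 : ‖e t‖^2 ≤ δ₀^2 := le_trans (pi_norm_sq_le_sum (e t)) hgt
    calc ‖e t‖ = Real.sqrt (‖e t‖^2) := (Real.sqrt_sq (norm_nonneg _)).symm
      _ ≤ Real.sqrt (δ₀^2) := Real.sqrt_le_sqrt h1
      _ = δ₀ := Real.sqrt_sq hδ₀.le
  -- derivative sign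
  have hderiv_le : ∀ t, 0 ≤ t → g t ≤ δ₀^2 →
      gd t * Real.exp (2*b*t) + g t * (Real.exp (2*b*t) * (2*b)) ≤ 0 := by
    intro t ht hgt
    have h1 : gd t ≤ -(2*b) * g t := by
      have h2 := hdiss (e t) (hnorm_le t hgt)
      rw [hgddef, hgdef]
      calc ∑ k, 2 * e t k * f (e t) k = 2 * ∑ k, e t k * f (e t) k := by
            rw [Finset.mul_sum]; exact Finset.sum_congr rfl fun k _ => by ring
        _ ≤ 2 * (-b * ∑ k, (e t k)^2) := by linarith
        _ = -(2*b) * ∑ k, (e t k)^2 := by ring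
    have hexp : 0 < Real.exp (2*b*t) := Real.exp_pos _
    nlinarith [hgnn t]
  have hg0 : g 0 < δ₀^2 := by
    have h1 : g 0 ≤ n * ‖e 0‖^2 := sum_sq_le_card_norm (e 0)
    have h2 : ‖e 0‖^2 < (δ₀ / Real.sqrt n)^2 := by
      apply pow_lt_pow_left₀ hinit (norm_nonneg _)
      norm_num
    have h3 : n * (δ₀ / Real.sqrt n)^2 = δ₀^2 := by
      rw [div_pow, Real.sq_sqrt hnpos.le]
      field_simp
    nlinarith
  -- main claim
  have hmain : ∀ t, 0 ≤ t → h t ≤ h 0 := by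
    by_contra hcon
    push_neg at hcon
    obtain ⟨t₀, ht₀, hht₀⟩ := hcon
    set Sbad : Set ℝ := {s | 0 ≤ s ∧ h 0 < h s} with hSdef
    have hSne : Sbad.Nonempty := ⟨t₀, ht₀, hht₀⟩
    have hSbdd : BddBelow Sbad := ⟨0, fun s hs => hs.1⟩
    set c : ℝ := sInf Sbad with hcdef
    have hc0 : 0 ≤ c := le_csInf hSne fun s hs => hs.1
    have hbelow : ∀ s, 0 ≤ s → s < c → h s ≤ h 0 := by
      intro s hs hsc
      by_contra hgt
      push_neg at hgt
      exact absurd (csInf_le hSbdd ⟨hs, hgt⟩) (not_le.mpr hsc)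
    have hg_of_h : ∀ s, 0 ≤ s → h s ≤ h 0 → g s ≤ g 0 := by
      intro s hs hhs
      have h1 : (1:ℝ) ≤ Real.exp (2*b*s) := by
        rw [← Real.exp_zero]
        apply Real.exp_le_exp.mpr
        positivity
      have h2 : h 0 = g 0 := by rw [hhdef]; simp
      have h3 : g s * Real.exp (2*b*s) ≤ g 0 := by rw [← h2]; exact hhs
      nlinarith [hgnn s]
    have hhc : h c ≤ h 0 := by
      rcases eq_or_lt_of_le hc0 with hceq | hclt
      · rw [← hceq]
      · have htend : Filter.Tendsto h (nhdsWithin c (Set.Iio c)) (nhds (h c)) :=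
          ((hhcont c hc0).continuousWithinAt)
        apply le_of_tendsto htend
        filter_upwards [self_mem_nhdsWithin,
          eventually_nhdsWithin_of_eventually_nhds
            (eventually_gt_nhds hclt)] with s hs1 hs2
        exact hbelow s hs2.le hs1
    have hgc : g c < δ₀^2 := lt_of_le_of_lt (hg_of_h c hc0 hhc) hg0
    have hev : ∀ᶠ s in nhds c, g s < δ₀^2 :=
      (hgcont c hc0).eventually_lt_const hgc
    obtain ⟨ε, hε, hball⟩ := Metric.eventually_nhds_iff.mp hev
    set T : ℝ := c + ε/2 with hTdef
    have hTpos : 0 < T := by positivity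
    have hall : ∀ s ∈ Set.Icc (0:ℝ) T, g s ≤ δ₀^2 := by
      rintro s ⟨hs0, hsT⟩
      rcases le_or_gt s c with hsc | hcs
      · rcases eq_or_lt_of_le hsc with hseq | hslt
        · rw [hseq]; exact hgc.le
        · exact (lt_of_le_of_lt (hg_of_h s hs0 (hbelow s hs0 hslt)) hg0).le
      · apply le_of_lt
        apply hball
        rw [Real.dist_eq, abs_lt]
        have hsT' : s ≤ c + ε / 2 := by rw [← hTdef]; exact hsT
        exact ⟨by linarith, by linarith⟩
    have hanti : AntitoneOn h (Set.Icc (0:ℝ) T) := by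
      apply antitoneOn_of_deriv_nonpos (convex_Icc 0 T)
      · intro s hs
        exact (hhcont s hs.1).continuousWithinAt
      · rw [interior_Icc]
        intro s hs
        exact ((hh' s hs.1.le).differentiableAt).differentiableWithinAt
      · rw [interior_Icc]
        intro s hs
        rw [(hh' s hs.1.le).deriv]
        exact hderiv_le s hs.1.le (hall s ⟨hs.1.le, hs.2.le⟩)
    have hcT : c < T := by rw [hTdef]; linarith
    obtain ⟨s, hsS, hsT⟩ := exists_lt_of_csInf_lt hSne hcT
    have hsIcc : s ∈ Set.Icc (0:ℝ) T := ⟨hsS.1, hsT.le⟩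
    have := hanti (Set.left_mem_Icc.mpr hTpos.le) hsIcc hsS.1
    exact absurd hsS.2 (not_lt.mpr this)
  -- conclude
  intro t ht
  have h1 : g t * Real.exp (2*b*t) ≤ g 0 := by
    have := hmain t ht
    rw [hhdef] at this
    simpa using this
  have hexp : 0 < Real.exp (2*b*t) := Real.exp_pos _
  have h2 : g t ≤ g 0 * Real.exp (-(2*b*t)) := by
    rw [Real.exp_neg, ← div_eq_mul_inv, le_div_iff₀ hexp]
    exact h1
  have h3 : g 0 ≤ n * ‖e 0‖^2 := sum_sq_le_card_norm (e 0)
  have h4 : ‖e t‖^2 ≤ n * ‖e 0‖^2 * Real.exp (-(2*b*t)) := by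
    calc ‖e t‖^2 ≤ g t := pi_norm_sq_le_sum (e t)
      _ ≤ g 0 * Real.exp (-(2*b*t)) := h2
      _ ≤ n * ‖e 0‖^2 * Real.exp (-(2*b*t)) :=
          mul_le_mul_of_nonneg_right h3 (Real.exp_pos _).le
  have h5 : (Real.sqrt n * Real.exp (-b*t) * ‖e 0‖)^2 = n * ‖e 0‖^2 * Real.exp (-(2*b*t)) := by
    have hsq : Real.exp (-b*t)^2 = Real.exp (-(2*b*t)) := by
      rw [sq, ← Real.exp_add]; congr 1; ring
    rw [mul_pow, mul_pow, Real.sq_sqrt hnpos.le, hsq]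
    ring
  have h6 : ‖e t‖^2 ≤ (Real.sqrt n * Real.exp (-b*t) * ‖e 0‖)^2 := by rw [h5]; exact h4
  have h7 : 0 ≤ Real.sqrt n * Real.exp (-b*t) * ‖e 0‖ := by positivity
  exact (pow_le_pow_iff_left₀ (norm_nonneg _) h7 (by norm_num)).mp h6

/-- Theorem 2: For an acyclic finite undirected graph with at least one
edge, incidence matrix `B`, and gains `r, k_r > 0` with `r - π k_r max_i |N_i| > 0`,
the equilibrium `e = 0` of the circular formation error dynamics
`e_k' = 1/(r + k_r B_i e) - 1/(r + k_r B_j e)` is locally exponentially stable. -/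
theorem circular_formation_locally_exponentially_stable
    {V E : Type*} [Fintype V] [Fintype E] [DecidableEq V] [Nonempty V]
    [Nonempty E]
    (tail head : E → V)
    (h_loop : ∀ k, tail k ≠ head k)
    (h_simple : Function.Injective fun k : E => s(tail k, head k))
    (h_acyclic : (SimpleGraph.fromEdgeSet
        (Set.range fun k : E => s(tail k, head k))).IsAcyclic)
    (B : Matrix V E ℝ)
    (hB : ∀ i k, B i k = if i = tail k then 1 else if i = head k then -1 else 0)
    (r kr : ℝ) (hr : 0 < r) (hkr : 0 < kr)
    (hgain : 0 < r - Real.pi * kr *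
      (Finset.univ.sup' Finset.univ_nonempty fun i : V => ∑ k : E, |B i k|))
    (f : (E → ℝ) → (E → ℝ))
    (hf : ∀ (e : E → ℝ) (k : E),
      f e k = 1 / (r + kr * (B (tail k) ⬝ᵥ e)) - 1 / (r + kr * (B (head k) ⬝ᵥ e))) :
    ∃ δ a b : ℝ, 0 < δ ∧ 0 < a ∧ 0 < b ∧
      ∀ e : ℝ → E → ℝ, (∀ t : ℝ, 0 ≤ t → HasDerivAt e (f (e t)) t) →
        ‖e 0‖ < δ → ∀ t : ℝ, 0 ≤ t → ‖e t‖ ≤ a * Real.exp (-b * t) * ‖e 0‖ := by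
  classical
  obtain ⟨lam, hlam, hcoer⟩ := coercive B (B_inj tail head h_loop h_simple h_acyclic B hB)
  have hcard : (0:ℝ) < Fintype.card E := by exact_mod_cast Fintype.card_pos
  set δ₀ : ℝ := r / (2 * kr * (Fintype.card E : ℝ)) with hδ₀def
  have hδ₀ : 0 < δ₀ := by
    apply div_pos hr
    positivity
  set b : ℝ := kr / (2*r^2) * lam with hbdef
  have hb : 0 < b := by positivity
  refine ⟨δ₀ / Real.sqrt (Fintype.card E), Real.sqrt (Fintype.card E), b, ?_, ?_, hb, ?_⟩
  · positivity
  · positivity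
  · intro e he hinit t ht
    have hdiss : ∀ x : E → ℝ, ‖x‖ ≤ δ₀ → ∑ k, x k * f x k ≤ -b * ∑ k, (x k)^2 := by
      intro x hx
      exact key_ineq tail head h_loop B hB r kr hr hkr f hf lam hlam hcoer x hx
    exact exp_decay f b δ₀ hb hδ₀ hdiss e he hinit t ht
end

section
/- Let G = (V, E) be a finite undirected graph with no cycles and incidence matrix B, and let r > 0 and k_r > 0. Let e ∈ ℝ^{|E|} be such that r + k_r B_i e > 0 for every vertex i, and suppose that for every edge k with tail i and head j, 1/(r + k_r B_i e) - 1/(r + k_r B_j e) = 0. Then e = 0. In other words, e = 0 is the only equilibrium of the formation error dynamics in the region where all commanded radii are positive. -/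
open Matrix

/-- For an acyclic finite undirected graph, if all commanded radii
`r + k_r B_i e` are positive and `1/(r + k_r B_i e) - 1/(r + k_r B_j e) = 0` for every
edge `k = (i, j)`, then `e = 0`: the origin is the only equilibrium of the formation
error dynamics in the region where all commanded radii are positive. -/
theorem formation_equilibrium_unique
    {V E : Type*} [Fintype V] [Fintype E] [DecidableEq V]
    (tail head : E → V)
    (h_loop : ∀ k, tail k ≠ head k)
    (h_simple : Function.Injective fun k : E => s(tail k, head k))
    (h_acyclic : (SimpleGraph.fromEdgeSet
        (Set.range fun k : E => s(tail k, head k))).IsAcyclic)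
    (B : Matrix V E ℝ)
    (hB : ∀ i k, B i k = if i = tail k then 1 else if i = head k then -1 else 0)
    (r kr : ℝ) (hr : 0 < r) (hkr : 0 < kr)
    (e : E → ℝ)
    (hpos : ∀ i : V, 0 < r + kr * (B i ⬝ᵥ e))
    (heq : ∀ k : E,
      1 / (r + kr * (B (tail k) ⬝ᵥ e)) - 1 / (r + kr * (B (head k) ⬝ᵥ e)) = 0) :
    e = 0 := by
  classical
  set G := SimpleGraph.fromEdgeSet (Set.range fun k : E => s(tail k, head k)) with hG
  -- Step 1: the equilibrium condition means B (tail k) ⬝ᵥ e = B (head k) ⬝ᵥ e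
  have hBe_eq : ∀ k, B (tail k) ⬝ᵥ e = B (head k) ⬝ᵥ e := by
    intro k
    have h1 := hpos (tail k)
    have h2 := hpos (head k)
    have h3 := heq k
    have h4 : r + kr * (B (tail k) ⬝ᵥ e) = r + kr * (B (head k) ⬝ᵥ e) := by
      field_simp at h3
      linarith
    have := hkr.ne'
    nlinarith [h4]
  -- the vertex function is constant along adjacency
  have hadj : ∀ {i j : V}, G.Adj i j → B i ⬝ᵥ e = B j ⬝ᵥ e := by
    intro i j hij
    rw [hG, SimpleGraph.fromEdgeSet_adj] at hij
    obtain ⟨⟨k, hk⟩, hne⟩ := hij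
    rw [Sym2.eq_iff] at hk
    rcases hk with ⟨h1, h2⟩ | ⟨h1, h2⟩
    · rw [← h1, ← h2]; exact hBe_eq k
    · rw [← h1, ← h2]; exact (hBe_eq k).symm
  have hreach : ∀ {i j : V}, G.Reachable i j → B i ⬝ᵥ e = B j ⬝ᵥ e := by
    intro i j hij
    obtain ⟨w⟩ := hij
    induction w with
    | nil => rfl
    | cons h p ih => exact (hadj h).trans ih
  -- column sums over a vertex set
  have hsum : ∀ (S : Finset V) (k' : E),
      ∑ i ∈ S, B i k' =
        (if tail k' ∈ S then (1 : ℝ) else 0) - (if head k' ∈ S then (1 : ℝ) else 0) := by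
    intro S k'
    have : ∀ i, B i k' = (if i = tail k' then (1 : ℝ) else 0)
        - (if i = head k' then (1 : ℝ) else 0) := by
      intro i
      rw [hB]
      by_cases h1 : i = tail k'
      · have : i ≠ head k' := by rw [h1]; exact h_loop k'
        simp [h1, this, h_loop k']
      · by_cases h2 : i = head k' <;> simp [h1, h2, h_loop k', (h_loop k').symm]
    simp_rw [this]
    rw [Finset.sum_sub_distrib, Finset.sum_ite_eq' S (tail k'), Finset.sum_ite_eq' S (head k')]
  -- generic cut lemma: sum of (B e) over an S is expressed via crossing indicator
  have hcut : ∀ (S : Finset V),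
      ∑ i ∈ S, B i ⬝ᵥ e = ∑ k' : E, ((if tail k' ∈ S then (1 : ℝ) else 0)
        - (if head k' ∈ S then (1 : ℝ) else 0)) * e k' := by
    intro S
    simp only [dotProduct]
    rw [Finset.sum_comm]
    refine Finset.sum_congr rfl fun k' _ => ?_
    rw [← Finset.sum_mul, hsum]
  -- Step 2: B e = 0
  have hBe0 : ∀ i, B i ⬝ᵥ e = 0 := by
    intro i
    set S : Finset V := Finset.univ.filter (fun j => G.Reachable i j) with hS
    have hmem : ∀ j, j ∈ S ↔ G.Reachable i j := by
      intro j; simp [hS]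
    have hclosed : ∀ k', tail k' ∈ S ↔ head k' ∈ S := by
      intro k'
      have hadjk : G.Adj (tail k') (head k') := by
        rw [hG, SimpleGraph.fromEdgeSet_adj]
        exact ⟨⟨k', rfl⟩, h_loop k'⟩
      rw [hmem, hmem]
      exact ⟨fun h => h.trans hadjk.reachable, fun h => h.trans hadjk.symm.reachable⟩
    have hzero : ∑ j ∈ S, B j ⬝ᵥ e = 0 := by
      rw [hcut]
      refine Finset.sum_eq_zero fun k' _ => ?_
      by_cases h : tail k' ∈ S
      · simp [h, (hclosed k').mp h]
      · have h2 : head k' ∉ S := fun hh => h ((hclosed k').mpr hh)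
        simp [h, h2]
    have hconst : ∑ j ∈ S, B j ⬝ᵥ e = (S.card : ℝ) * (B i ⬝ᵥ e) := by
      rw [Finset.sum_congr rfl fun j hj => (hreach ((hmem j).mp hj)).symm]
      simp [mul_comm]
    have hiS : i ∈ S := (hmem i).mpr (SimpleGraph.Reachable.refl i)
    have hcard : (S.card : ℝ) ≠ 0 := by
      have : 0 < S.card := Finset.card_pos.mpr ⟨i, hiS⟩
      exact_mod_cast this.ne'
    have := hconst.symm.trans hzero
    exact (mul_eq_zero.mp this).resolve_left hcard
  -- Step 3: each edge is a bridge; cut argument gives e k = 0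
  have hek : ∀ k, e k = 0 := by
    intro k
    have hadjk : G.Adj (tail k) (head k) := by
      rw [hG, SimpleGraph.fromEdgeSet_adj]
      exact ⟨⟨k, rfl⟩, h_loop k⟩
    have hbridge := SimpleGraph.isAcyclic_iff_forall_adj_isBridge.mp h_acyclic hadjk
    rw [SimpleGraph.isBridge_iff] at hbridge
    set G' := G \ SimpleGraph.fromEdgeSet {s(tail k, head k)} with hG'
    set S : Finset V := Finset.univ.filter (fun j => G'.Reachable (tail k) j) with hS
    have hmem : ∀ j, j ∈ S ↔ G'.Reachable (tail k) j := by
      intro j; simp [hS]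
    have htail : tail k ∈ S := (hmem _).mpr (SimpleGraph.Reachable.refl _)
    have hhead : head k ∉ S := fun h => hbridge ((hmem _).mp h)
    have hclosed : ∀ k', k' ≠ k → (tail k' ∈ S ↔ head k' ∈ S) := by
      intro k' hk'
      have hadjk' : G'.Adj (tail k') (head k') := by
        rw [hG', SimpleGraph.sdiff_adj, SimpleGraph.fromEdgeSet_adj]
        refine ⟨⟨⟨k', rfl⟩, h_loop k'⟩, ?_⟩
        · rintro ⟨hmem', -⟩
          exact hk' (h_simple (Set.mem_singleton_iff.mp hmem'))
      rw [hmem, hmem]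
      exact ⟨fun h => h.trans hadjk'.reachable, fun h => h.trans hadjk'.symm.reachable⟩
    have hzero : ∑ j ∈ S, B j ⬝ᵥ e = 0 := Finset.sum_eq_zero fun j _ => hBe0 j
    have : ∑ j ∈ S, B j ⬝ᵥ e = e k := by
      rw [hcut]
      rw [Finset.sum_eq_single k]
      · simp [htail, hhead]
      · intro k' _ hk'
        by_cases h : tail k' ∈ S
        · simp [h, (hclosed k' hk').mp h]
        · have h2 : head k' ∉ S := fun hh => h ((hclosed k' hk').mpr hh)
          simp [h, h2]
      · intro h; exact absurd (Finset.mem_univ k) h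
    rw [hzero] at this
    exact this.symm
  funext k
  exact hek k
end

section
/- Let r > 0 and k_e > 0. Define φ : ℝ² → ℝ by φ(p) = p_x² + p_y² - r², the normal vector n(p) = ∇φ(p) = 2p, the tangent vector τ(p) = E n(p) with E the rotation matrix E = [[0, 1], [-1, 0]], and the guidance vector field ṗ_d(p) = τ(p) - k_e φ(p) n(p). If p : ℝ → ℝ² is a differentiable solution of p'(t) = ṗ_d(p(t)), then the error e(t) = φ(p(t)) satisfies e'(t) = -4 k_e ‖p(t)‖² e(t) for all t. -/
open Matrix

/-- Along any solution of the guidance vector field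
`ṗ_d(p) = τ(p) - k_e φ(p) n(p)`, with `φ(p) = p_x² + p_y² - r²`, `n(p) = 2p`,
`τ(p) = E n(p)`, `E = [[0,1],[-1,0]]`, the error `e(t) = φ(p(t))` satisfies
`e'(t) = -4 k_e ‖p(t)‖² e(t)`. -/
theorem gvf_error_dynamics
    (r ke : ℝ) (hr : 0 < r) (hke : 0 < ke)
    (φ : EuclideanSpace ℝ (Fin 2) → ℝ)
    (hφ : ∀ q, φ q = q 0 ^ 2 + q 1 ^ 2 - r ^ 2)
    (n : EuclideanSpace ℝ (Fin 2) → EuclideanSpace ℝ (Fin 2))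
    (hn : ∀ q, n q = (2 : ℝ) • q)
    (τ : EuclideanSpace ℝ (Fin 2) → EuclideanSpace ℝ (Fin 2))
    (hτ : ∀ q, τ q = (WithLp.equiv 2 (Fin 2 → ℝ)).symm
      ((!![0, 1; -1, 0] : Matrix (Fin 2) (Fin 2) ℝ).mulVec
        (WithLp.equiv 2 (Fin 2 → ℝ) (n q))))
    (pd : EuclideanSpace ℝ (Fin 2) → EuclideanSpace ℝ (Fin 2))
    (hpd : ∀ q, pd q = τ q - (ke * φ q) • n q)
    (p : ℝ → EuclideanSpace ℝ (Fin 2))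
    (hp : ∀ t, HasDerivAt p (pd (p t)) t) :
    ∀ t, HasDerivAt (fun s => φ (p s)) (-4 * ke * ‖p t‖ ^ 2 * φ (p t)) t := by
  intro t
  have hpd0 : pd (p t) 0 = 2 * p t 1 - ke * φ (p t) * (2 * p t 0) := by
    simp [hpd, hτ, hn, Matrix.mulVec, dotProduct, Fin.sum_univ_two,
      PiLp.sub_apply, PiLp.smul_apply, smul_eq_mul]
  have hpd1 : pd (p t) 1 = -(2 * p t 0) - ke * φ (p t) * (2 * p t 1) := by
    simp [hpd, hτ, hn, Matrix.mulVec, dotProduct, Fin.sum_univ_two,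
      PiLp.sub_apply, PiLp.smul_apply, smul_eq_mul]
  have h0 : HasDerivAt (fun s => p s 0) (pd (p t) 0) t :=
    (EuclideanSpace.proj (0 : Fin 2) : EuclideanSpace ℝ (Fin 2) →L[ℝ] ℝ).hasFDerivAt.comp_hasDerivAt t (hp t)
  have h1 : HasDerivAt (fun s => p s 1) (pd (p t) 1) t :=
    (EuclideanSpace.proj (1 : Fin 2) : EuclideanSpace ℝ (Fin 2) →L[ℝ] ℝ).hasFDerivAt.comp_hasDerivAt t (hp t)
  have hnorm : ‖p t‖ ^ 2 = p t 0 ^ 2 + p t 1 ^ 2 := by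
    rw [EuclideanSpace.norm_eq, Real.sq_sqrt (by positivity)]
    simp [Fin.sum_univ_two, sq_abs]
  have key : HasDerivAt (fun s => φ (p s))
      (2 * p t 0 ^ 1 * pd (p t) 0 + 2 * p t 1 ^ 1 * pd (p t) 1) t := by
    simp only [hφ]
    exact (((h0.pow 2).add (h1.pow 2)).sub_const _).congr_deriv (by push_cast; ring)
  convert key using 1
  rw [hpd0, hpd1, hnorm, hφ]
  ring
end

section
/- Let r > 0, k_e > 0 and ρ > 0. Define φ(p) = p_x² + p_y² - r², n(p) = 2p, τ(p) = E n(p) with E = [[0, 1], [-1, 0]], and ṗ_d(p) = τ(p) - k_e φ(p) n(p). Let p : [0, ∞) → ℝ² be a differentiable solution of p'(t) = ṗ_d(p(t)) satisfying ‖p(t)‖ ≥ ρ for all t ≥ 0. Then the tracking error decays exponentially: |φ(p(t))| ≤ |φ(p(0))| · e^{-4 k_e ρ² t} for all t ≥ 0. -/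
open Matrix

/-- If a solution of the guidance vector field
`ṗ_d(p) = τ(p) - k_e φ(p) n(p)` stays at distance at least `ρ > 0` from the origin,
then the tracking error decays exponentially:
`|φ(p(t))| ≤ |φ(p(0))| e^{-4 k_e ρ² t}` for all `t ≥ 0`. -/
theorem gvf_error_exponential_decay
    (r ke ρ : ℝ) (hr : 0 < r) (hke : 0 < ke) (hρ : 0 < ρ)
    (φ : EuclideanSpace ℝ (Fin 2) → ℝ)
    (hφ : ∀ q, φ q = q 0 ^ 2 + q 1 ^ 2 - r ^ 2)
    (n : EuclideanSpace ℝ (Fin 2) → EuclideanSpace ℝ (Fin 2))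
    (hn : ∀ q, n q = (2 : ℝ) • q)
    (τ : EuclideanSpace ℝ (Fin 2) → EuclideanSpace ℝ (Fin 2))
    (hτ : ∀ q, τ q = (WithLp.equiv 2 (Fin 2 → ℝ)).symm
      ((!![0, 1; -1, 0] : Matrix (Fin 2) (Fin 2) ℝ).mulVec
        (WithLp.equiv 2 (Fin 2 → ℝ) (n q))))
    (pd : EuclideanSpace ℝ (Fin 2) → EuclideanSpace ℝ (Fin 2))
    (hpd : ∀ q, pd q = τ q - (ke * φ q) • n q)
    (p : ℝ → EuclideanSpace ℝ (Fin 2))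
    (hp : ∀ t : ℝ, 0 ≤ t → HasDerivAt p (pd (p t)) t)
    (hfar : ∀ t : ℝ, 0 ≤ t → ρ ≤ ‖p t‖) :
    ∀ t : ℝ, 0 ≤ t →
      |φ (p t)| ≤ |φ (p 0)| * Real.exp (-4 * ke * ρ ^ 2 * t) := by
  intro t ht
  set K : ℝ := 4 * ke * ρ ^ 2 with hK
  have hKpos : 0 < K := by positivity
  -- components of the vector field
  have hpd0 : ∀ q, pd q 0 = 2 * q 1 - ke * φ q * (2 * q 0) := by
    intro q
    simp [hpd, hτ, hn, Matrix.mulVec, dotProduct, Fin.sum_univ_two, Matrix.vecHead, Matrix.vecTail]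
  have hpd1 : ∀ q, pd q 1 = -(2 * q 0) - ke * φ q * (2 * q 1) := by
    intro q
    simp [hpd, hτ, hn, Matrix.mulVec, dotProduct, Fin.sum_univ_two, Matrix.vecHead, Matrix.vecTail]
  -- coordinate derivatives
  have hcoord : ∀ (i : Fin 2) (s : ℝ), 0 ≤ s →
      HasDerivAt (fun u => p u i) (pd (p s) i) s := by
    intro i s hs
    exact (EuclideanSpace.proj i).hasFDerivAt.comp_hasDerivAt s (hp s hs)
  -- derivative of the error
  have hE : ∀ s : ℝ, 0 ≤ s → HasDerivAt (fun u => φ (p u))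
      (-(4 * ke * ((p s 0) ^ 2 + (p s 1) ^ 2)) * φ (p s)) s := by
    intro s hs
    have h0 := (hcoord 0 s hs).pow 2
    have h1 := (hcoord 1 s hs).pow 2
    have h2 := (h0.add h1).sub_const (r ^ 2)
    have heq : (fun u => (p u 0) ^ 2 + (p u 1) ^ 2 - r ^ 2) = fun u => φ (p u) := by
      funext u; rw [hφ]
    replace h2 := h2.congr_of_eventuallyEq (Filter.Eventually.of_forall fun u => (congrFun heq u).symm)
    refine h2.congr_deriv ?_
    rw [hpd0, hpd1, hφ]
    ring
  -- lower bound on the coefficient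
  have hc : ∀ s : ℝ, 0 ≤ s → K ≤ 4 * ke * ((p s 0) ^ 2 + (p s 1) ^ 2) := by
    intro s hs
    have hn2 : ‖p s‖ ^ 2 = (p s 0) ^ 2 + (p s 1) ^ 2 := by
      rw [EuclideanSpace.norm_eq, Real.sq_sqrt (by positivity)]
      simp [Fin.sum_univ_two]
    have : ρ ^ 2 ≤ ‖p s‖ ^ 2 :=
      pow_le_pow_left₀ hρ.le (hfar s hs) 2
    rw [hn2] at this
    have h4 : (0:ℝ) ≤ 4 * ke := by positivity
    calc K = 4 * ke * ρ ^ 2 := hK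
      _ ≤ 4 * ke * ((p s 0) ^ 2 + (p s 1) ^ 2) := by nlinarith
  -- Lyapunov-type function
  set H : ℝ → ℝ := fun u => (φ (p u)) ^ 2 * Real.exp (2 * K * u) with hH
  have hHderiv : ∀ s : ℝ, 0 ≤ s → HasDerivAt H
      ((2 * (K - 4 * ke * ((p s 0) ^ 2 + (p s 1) ^ 2)) * (φ (p s)) ^ 2)
        * Real.exp (2 * K * s)) s := by
    intro s hs
    have hlin : HasDerivAt (fun u : ℝ => 2 * K * u) (2 * K) s := by
      simpa using (hasDerivAt_id s).const_mul (2 * K)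
    have hexp : HasDerivAt (fun u : ℝ => Real.exp (2 * K * u))
        (Real.exp (2 * K * s) * (2 * K)) s :=
      (Real.hasDerivAt_exp (2 * K * s)).comp s hlin
    have := ((hE s hs).pow 2).mul hexp
    refine this.congr_deriv ?_
    simp only [Pi.pow_apply]; ring
  have hHanti : AntitoneOn H (Set.Ici (0 : ℝ)) := by
    apply antitoneOn_of_deriv_nonpos (convex_Ici 0)
    · intro x hx
      exact ((hHderiv x hx).continuousAt).continuousWithinAt
    · intro x hx
      rw [interior_Ici] at hx
      exact (hHderiv x (le_of_lt hx)).differentiableAt.differentiableWithinAt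
    · intro x hx
      rw [interior_Ici] at hx
      rw [(hHderiv x (le_of_lt hx)).deriv]
      have h1 : K - 4 * ke * ((p x 0) ^ 2 + (p x 1) ^ 2) ≤ 0 :=
        sub_nonpos.mpr (hc x (le_of_lt hx))
      have h2 : (0:ℝ) ≤ (φ (p x)) ^ 2 := sq_nonneg _
      have h3 : (0:ℝ) < Real.exp (2 * K * x) := Real.exp_pos _
      have h4 : (0:ℝ) ≤ (φ (p x)) ^ 2 * Real.exp (2 * K * x) := by positivity
      have h5 := mul_nonpos_of_nonpos_of_nonneg
        (by linarith : 2 * (K - 4 * ke * ((p x 0) ^ 2 + (p x 1) ^ 2)) ≤ 0) h4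
      calc 2 * (K - 4 * ke * ((p x 0) ^ 2 + (p x 1) ^ 2)) * (φ (p x)) ^ 2
            * Real.exp (2 * K * x)
          = 2 * (K - 4 * ke * ((p x 0) ^ 2 + (p x 1) ^ 2))
            * ((φ (p x)) ^ 2 * Real.exp (2 * K * x)) := by ring
        _ ≤ 0 := h5
  have hHt : H t ≤ H 0 := hHanti (Set.self_mem_Ici) ht ht
  have hH0 : H 0 = (φ (p 0)) ^ 2 := by simp [hH]
  -- conclude
  have hkey : (φ (p t)) ^ 2 ≤ (φ (p 0)) ^ 2 * Real.exp (-K * t) ^ 2 := by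
    have hexp2 : Real.exp (-K * t) ^ 2 = Real.exp (-(2 * K * t)) := by
      rw [sq, ← Real.exp_add]; congr 1; ring
    rw [hexp2]
    have hepos : (0:ℝ) < Real.exp (2 * K * t) := Real.exp_pos _
    rw [Real.exp_neg, ← sub_nonneg]
    have hHt' : (0:ℝ) ≤ H 0 - H t := sub_nonneg.mpr hHt
    have heq : (φ (p 0)) ^ 2 * (Real.exp (2 * K * t))⁻¹ - (φ (p t)) ^ 2
        = (H 0 - H t) * (Real.exp (2 * K * t))⁻¹ := by
      rw [hH0]; simp only [hH]; field_simp
    rw [heq]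
    exact mul_nonneg hHt' (inv_nonneg.mpr hepos.le)
  calc |φ (p t)| = Real.sqrt ((φ (p t)) ^ 2) := (Real.sqrt_sq_eq_abs _).symm
    _ ≤ Real.sqrt ((φ (p 0)) ^ 2 * Real.exp (-K * t) ^ 2) := Real.sqrt_le_sqrt hkey
    _ = |φ (p 0)| * Real.exp (-K * t) := by
        rw [Real.sqrt_mul (sq_nonneg _), Real.sqrt_sq_eq_abs,
          Real.sqrt_sq (Real.exp_nonneg _)]
    _ = |φ (p 0)| * Real.exp (-4 * ke * ρ ^ 2 * t) := by rw [hK]; ring_nf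
end
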